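/- arXiv:2205.15605 — 2 statements merged into one kernel-verified Lean document; each statement's English description precedes it below -/
import Mathlib

section
/- Let I_a : ℝ → ℝ be a cubic polynomial with positive leading coefficient a > 0, say I_a(v) = av³ + bv² + cv + d. Then there exist β₁ > 0 and a constant C > 0 such that for all v, v' ∈ ℝ: (I_a(v) + β₁v - I_a(v') - β₁v')·(v - v') ≥ (1/C)·(1 + |v| + |v'|)²·|v - v'|². -/
/-!
Factoring out `v - v'`, the left-hand side is `(v - v')²` times the difference quotient
`a (v² + v v' + v'²) + b (v + v') + c + β₁`. Since `v² + v v' + v'² ≥ (v² + v'²) / 2`, the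
quadratic part dominates half of `a (v² + v'²)`; completing the square absorbs the linear terms
`b v`, `b v'` into the other half at a cost of `2 b² / a`, which `β₁` pays together with `|c|`.
What remains is `a (1 + v² + v'²) / 4 ≥ a (1 + |v| + |v'|)² / 12`.
-/

theorem cubic_sub_cubic (a b c d v w : ℝ) :
    (a * v ^ 3 + b * v ^ 2 + c * v + d) - (a * w ^ 3 + b * w ^ 2 + c * w + d) =
      (a * (v ^ 2 + v * w + w ^ 2) + b * (v + w) + c) * (v - w) := by
  ring

theorem half_add_sq_le_sq_add_mul_add_sq (v w : ℝ) :
    (v ^ 2 + w ^ 2) / 2 ≤ v ^ 2 + v * w + w ^ 2 := by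
  nlinarith [sq_nonneg (v + w)]

theorem neg_sq_div_le_mul_sq_div_four_add_mul {a : ℝ} (ha : 0 < a) (b x : ℝ) :
    -(b ^ 2 / a) ≤ a * x ^ 2 / 4 + b * x := by
  have h : a * x ^ 2 / 4 + b * x + b ^ 2 / a = a * (x / 2 + b / a) ^ 2 := by
    field_simp
    ring
  linarith [mul_nonneg ha.le (sq_nonneg (x / 2 + b / a))]

theorem one_add_abs_add_abs_sq_le (v w : ℝ) :
    (1 + |v| + |w|) ^ 2 ≤ 3 * (1 + v ^ 2 + w ^ 2) := by
  nlinarith [sq_abs v, sq_abs w, sq_nonneg (1 - |v|), sq_nonneg (1 - |w|), sq_nonneg (|v| - |w|)]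

theorem mul_one_add_abs_add_abs_sq_le_quadratic {a : ℝ} (ha : 0 < a) (b c v w : ℝ) :
    a / 12 * (1 + |v| + |w|) ^ 2 ≤
      a * (v ^ 2 + v * w + w ^ 2) + b * (v + w) + c + (2 * b ^ 2 / a + |c| + a / 4) := by
  have hquad := mul_le_mul_of_nonneg_left (half_add_sq_le_sq_add_mul_add_sq v w) ha.le
  have hv := neg_sq_div_le_mul_sq_div_four_add_mul ha b v
  have hw := neg_sq_div_le_mul_sq_div_four_add_mul ha b w
  have habs := mul_le_mul_of_nonneg_left (one_add_abs_add_abs_sq_le v w) ha.le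
  have hb : 2 * b ^ 2 / a = b ^ 2 / a + b ^ 2 / a := by ring
  linarith [neg_abs_le c]

theorem stmt_4 (a b c d : ℝ) (ha : 0 < a) :
    ∃ β₁ : ℝ, 0 < β₁ ∧ ∃ C : ℝ, 0 < C ∧
      ∀ v v' : ℝ,
        ((a * v ^ 3 + b * v ^ 2 + c * v + d + β₁ * v)
          - (a * v' ^ 3 + b * v' ^ 2 + c * v' + d + β₁ * v')) * (v - v')
        ≥ (1 / C) * (1 + |v| + |v'|) ^ 2 * |v - v'| ^ 2 := by
  set β₁ := 2 * b ^ 2 / a + |c| + a / 4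
  refine ⟨β₁, by positivity, 12 / a, by positivity, fun v v' => ?_⟩
  have hdiff : (a * v ^ 3 + b * v ^ 2 + c * v + d + β₁ * v)
      - (a * v' ^ 3 + b * v' ^ 2 + c * v' + d + β₁ * v') =
      (a * (v ^ 2 + v * v' + v' ^ 2) + b * (v + v') + c + β₁) * (v - v') := by
    linear_combination cubic_sub_cubic a b (c + β₁) d v v'
  rw [hdiff, one_div_div, sq_abs, ge_iff_le, mul_assoc _ (v - v') (v - v'), ← sq]
  exact mul_le_mul_of_nonneg_right
    (mul_one_add_abs_add_abs_sq_le_quadratic ha b c v v') (sq_nonneg _)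
end

section
/- Let M₂ be the block matrix with blocks M₂[1,1] = Ā¹_ii + (1/2)Ǎ¹_ii, M₂[1,2] = -(1/2)Ǎ^{1,2}_ii, M₂[1,3] = -Ā¹_ie, M₂[2,1] = -(1/2)(Ǎ^{1,2}_ii)ᵀ, M₂[2,2] = Ā²_ii + (1/2)Ǎ²_ii, M₂[2,3] = -Ā²_ie, M₂[3,1] = -(Ā¹_ie)ᵀ, M₂[3,2] = -(Ā²_ie)ᵀ, M₂[3,3] = Ā¹_ee + Ā²_ee, and zeros elsewhere, where each block is a Gram matrix of the form (Ā^k_jl)_{ℓm} = ⟨φ^k_{j,ℓ}, φ^k_{l,m}⟩_{L²(Γ^k)} and (Ǎ)_{ℓm} = ⟨Ψ_{·,ℓ}, Ψ_{·,m}⟩_{L²(Γ^{1,2})} for families of L² functions on measure spaces Γ¹, Γ², Γ^{1,2}. Then M₂ is positive semi-definite. -/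
open MeasureTheory

private lemma memL2_mul_integrable {Γ : Type*} [MeasurableSpace Γ] {μ : Measure Γ}
    {f g : Γ → ℝ} (hf : MemLp f 2 μ) (hg : MemLp g 2 μ) :
    Integrable (fun x => f x * g x) μ := by
  have h := hg.smul (φ := f) hf (p := 2) (q := 2) (r := 1)
  exact memLp_one_iff_integrable.mp h

/-- Expand a product of linear combinations as a double sum of integrals. -/
private lemma integral_sum_mul_sum {Γ : Type*} [MeasurableSpace Γ] (μ : Measure Γ) (n : ℕ)
    (f g : Fin n → Γ → ℝ) (hf : ∀ ℓ, MemLp (f ℓ) 2 μ) (hg : ∀ ℓ, MemLp (g ℓ) 2 μ)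
    (a b : Fin n → ℝ) :
    ∫ x, (∑ ℓ, a ℓ * f ℓ x) * (∑ m, b m * g m x) ∂μ
      = ∑ ℓ, ∑ m, a ℓ * b m * ∫ x, f ℓ x * g m x ∂μ := by
  have key : ∀ x, (∑ ℓ, a ℓ * f ℓ x) * (∑ m, b m * g m x)
      = ∑ ℓ, ∑ m, a ℓ * b m * (f ℓ x * g m x) := by
    intro x
    rw [Finset.sum_mul_sum]
    exact Finset.sum_congr rfl fun ℓ _ => Finset.sum_congr rfl fun m _ => by ring
  simp_rw [key]
  rw [integral_finset_sum]
  · refine Finset.sum_congr rfl fun ℓ _ => ?_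
    rw [integral_finset_sum]
    · exact Finset.sum_congr rfl fun m _ => by
        rw [integral_const_mul]
    · intro m _
      exact ((memL2_mul_integrable (hf ℓ) (hg m)).const_mul _)
  · intro ℓ _
    exact integrable_finset_sum _ fun m _ =>
      ((memL2_mul_integrable (hf ℓ) (hg m)).const_mul _)

private lemma memL2_sum {Γ : Type*} [MeasurableSpace Γ] {μ : Measure Γ} {n : ℕ}
    {f : Fin n → Γ → ℝ} (hf : ∀ ℓ, MemLp (f ℓ) 2 μ) (a : Fin n → ℝ) :
    MemLp (fun x => ∑ ℓ, a ℓ * f ℓ x) 2 μ := by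
  have h := memLp_finset_sum' (μ := μ) (p := 2) Finset.univ
    (f := fun ℓ x => a ℓ * f ℓ x) fun ℓ _ => (hf ℓ).const_mul (a ℓ)
  have he : (∑ ℓ : Fin n, fun x => a ℓ * f ℓ x) = fun x => ∑ ℓ, a ℓ * f ℓ x := by
    ext x; simp
  rwa [he] at h

/-- `∫ (A - B)² = ∫A·A - 2∫A·B + ∫B·B` for `A, B ∈ L²`. -/
private lemma integral_sq_sub {Γ : Type*} [MeasurableSpace Γ] {μ : Measure Γ}
    {A B : Γ → ℝ} (hA : MemLp A 2 μ) (hB : MemLp B 2 μ) :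
    ∫ x, (A x - B x) ^ 2 ∂μ
      = (∫ x, A x * A x ∂μ) - 2 * (∫ x, A x * B x ∂μ) + ∫ x, B x * B x ∂μ := by
  have hAA := memL2_mul_integrable hA hA
  have hAB := memL2_mul_integrable hA hB
  have hBB := memL2_mul_integrable hB hB
  have key : ∀ x, (A x - B x) ^ 2 = A x * A x - 2 * (A x * B x) + B x * B x := by
    intro x; ring
  calc ∫ x, (A x - B x) ^ 2 ∂μ
      = ∫ x, (A x * A x - 2 * (A x * B x)) + B x * B x ∂μ := by simp_rw [key]
    _ = (∫ x, A x * A x - 2 * (A x * B x) ∂μ) + ∫ x, B x * B x ∂μ :=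
        integral_add (hAA.sub (hAB.const_mul 2)) hBB
    _ = ((∫ x, A x * A x ∂μ) - ∫ x, 2 * (A x * B x) ∂μ) + ∫ x, B x * B x ∂μ := by
        rw [integral_sub hAA (hAB.const_mul 2)]
    _ = (∫ x, A x * A x ∂μ) - 2 * (∫ x, A x * B x ∂μ) + ∫ x, B x * B x ∂μ := by
        rw [integral_const_mul]

/-- Positive semi-definiteness of the matrix `M₂` (Lemma 4.2), expressed via its
quadratic form: for all coefficient vectors `d1, d2, de` (the components `c¹, c²`
multiply zero blocks and contribute nothing), the quadratic form
`ᵗd M₂ d` built from the Gram blocks is nonnegative. -/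
theorem stmt_6 {Γ1 Γ2 Γ12 : Type*}
    [MeasurableSpace Γ1] [MeasurableSpace Γ2] [MeasurableSpace Γ12]
    (μ1 : Measure Γ1) (μ2 : Measure Γ2) (μ12 : Measure Γ12) (n : ℕ)
    (ψ1i ψ1e : Fin n → Γ1 → ℝ) (ψ2i ψ2e : Fin n → Γ2 → ℝ)
    (Ψ1 Ψ2 : Fin n → Γ12 → ℝ)
    (hψ1i : ∀ ℓ, MemLp (ψ1i ℓ) 2 μ1) (hψ1e : ∀ ℓ, MemLp (ψ1e ℓ) 2 μ1)
    (hψ2i : ∀ ℓ, MemLp (ψ2i ℓ) 2 μ2) (hψ2e : ∀ ℓ, MemLp (ψ2e ℓ) 2 μ2)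
    (hΨ1 : ∀ ℓ, MemLp (Ψ1 ℓ) 2 μ12) (hΨ2 : ∀ ℓ, MemLp (Ψ2 ℓ) 2 μ12)
    (d1 d2 de : Fin n → ℝ) :
    0 ≤ (∑ ℓ, ∑ m, d1 ℓ * d1 m *
            ((∫ x, ψ1i ℓ x * ψ1i m x ∂μ1) + (1 / 2) * ∫ x, Ψ1 ℓ x * Ψ1 m x ∂μ12))
      + (∑ ℓ, ∑ m, d2 ℓ * d2 m *
            ((∫ x, ψ2i ℓ x * ψ2i m x ∂μ2) + (1 / 2) * ∫ x, Ψ2 ℓ x * Ψ2 m x ∂μ12))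
      + (∑ ℓ, ∑ m, de ℓ * de m *
            ((∫ x, ψ1e ℓ x * ψ1e m x ∂μ1) + ∫ x, ψ2e ℓ x * ψ2e m x ∂μ2))
      - (∑ ℓ, ∑ m, d1 ℓ * d2 m * ∫ x, Ψ1 ℓ x * Ψ2 m x ∂μ12)
      - 2 * (∑ ℓ, ∑ m, d1 ℓ * de m * ∫ x, ψ1i ℓ x * ψ1e m x ∂μ1)
      - 2 * (∑ ℓ, ∑ m, d2 ℓ * de m * ∫ x, ψ2i ℓ x * ψ2e m x ∂μ2) := by
  -- the three nonnegative energies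
  have hE1 : (0:ℝ) ≤ ∫ x, ((∑ ℓ, d1 ℓ * ψ1i ℓ x) - ∑ ℓ, de ℓ * ψ1e ℓ x) ^ 2 ∂μ1 :=
    integral_nonneg fun x => sq_nonneg _
  have hE2 : (0:ℝ) ≤ ∫ x, ((∑ ℓ, d2 ℓ * ψ2i ℓ x) - ∑ ℓ, de ℓ * ψ2e ℓ x) ^ 2 ∂μ2 :=
    integral_nonneg fun x => sq_nonneg _
  have hE3 : (0:ℝ) ≤ ∫ x, ((∑ ℓ, d1 ℓ * Ψ1 ℓ x) - ∑ ℓ, d2 ℓ * Ψ2 ℓ x) ^ 2 ∂μ12 :=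
    integral_nonneg fun x => sq_nonneg _
  -- expand each energy
  have e1 := integral_sq_sub (memL2_sum hψ1i d1) (memL2_sum hψ1e de)
  have e2 := integral_sq_sub (memL2_sum hψ2i d2) (memL2_sum hψ2e de)
  have e3 := integral_sq_sub (memL2_sum hΨ1 d1) (memL2_sum hΨ2 d2)
  rw [integral_sum_mul_sum μ1 n ψ1i ψ1i hψ1i hψ1i d1 d1,
      integral_sum_mul_sum μ1 n ψ1i ψ1e hψ1i hψ1e d1 de,
      integral_sum_mul_sum μ1 n ψ1e ψ1e hψ1e hψ1e de de] at e1
  rw [integral_sum_mul_sum μ2 n ψ2i ψ2i hψ2i hψ2i d2 d2,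
      integral_sum_mul_sum μ2 n ψ2i ψ2e hψ2i hψ2e d2 de,
      integral_sum_mul_sum μ2 n ψ2e ψ2e hψ2e hψ2e de de] at e2
  rw [integral_sum_mul_sum μ12 n Ψ1 Ψ1 hΨ1 hΨ1 d1 d1,
      integral_sum_mul_sum μ12 n Ψ1 Ψ2 hΨ1 hΨ2 d1 d2,
      integral_sum_mul_sum μ12 n Ψ2 Ψ2 hΨ2 hΨ2 d2 d2] at e3
  rw [e1] at hE1; rw [e2] at hE2; rw [e3] at hE3
  have h3 := mul_nonneg (by norm_num : (0:ℝ) ≤ 1/2) hE3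
  have pull : ∀ (J : Fin n → Fin n → ℝ) (a b : Fin n → ℝ),
      ∑ ℓ, ∑ m, a ℓ * b m * (1/2 * J ℓ m) = 1/2 * ∑ ℓ, ∑ m, a ℓ * b m * J ℓ m := by
    intro J a b
    rw [Finset.mul_sum]
    refine Finset.sum_congr rfl fun ℓ _ => ?_
    rw [Finset.mul_sum]
    exact Finset.sum_congr rfl fun m _ => by ring
  simp only [mul_add, Finset.sum_add_distrib]
  rw [pull, pull]
  linarith
end
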